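/- Let X be a measurable space and K a kernel on X. Let φ : X × ℝ → ℝ be Borel measurable with φ(x,0) = 0 and such that t ↦ φ(x,t) is increasing for every x ∈ X. Let u₁, u₂, v₁, v₂ : X → ℝ be Borel with K|φ(·,u_j)| < ∞ pointwise and u_j + Kφ(·,u_j) = v_j for j = 1,2. (a) If w : X → [0,∞] is Borel with w ≥ v₂ − v₁ and K satisfies the domination principle relative to w, then v₂ − v₁ ≤ u₂ − u₁ + w on X. (b) If v₂ − v₁ ≥ 0 and K satisfies the domination principle relative to the function v₂ − v₁, then 0 ≤ u₂ − u₁ ≤ v₂ − v₁ on X. -/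

import Mathlib

/-!
Put `f := φ(·,u₂) - φ(·,u₁)`, so that `Kf = (v₂ - v₁) - (u₂ - u₁)`. Where `f > 0`,
monotonicity of `φ` forces `u₁ < u₂`, hence `Kf < v₂ - v₁ ≤ w` there; the domination principle
applied to `g = f⁺`, `h = f⁻` spreads `Kf ≤ w` to all of `X`, which is (a). Taking
`w = v₂ - v₁` in (a) gives `u₁ ≤ u₂`, so `f ≥ 0`, `Kf ≥ 0`, and (b) follows.
-/

open MeasureTheory ProbabilityTheory
open scoped ENNReal

/-- `K` satisfies the domination principle relative to `w`: if `Kg ≤ Kh + w` holds at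
every point of `{g > 0}` (for Borel `g, h : X → [0,∞]`), then it holds everywhere. -/
def DomPrinciple {X : Type*} [MeasurableSpace X] (K : Kernel X X) (w : X → ℝ≥0∞) : Prop :=
  ∀ g h : X → ℝ≥0∞, Measurable g → Measurable h →
    (∀ x, 0 < g x → ∫⁻ y, g y ∂(K x) ≤ (∫⁻ y, h y ∂(K x)) + w x) →
    ∀ x, ∫⁻ y, g y ∂(K x) ≤ (∫⁻ y, h y ∂(K x)) + w x

theorem ofReal_integral_le_iff_lintegral_le {α : Type*} [MeasurableSpace α] {μ : Measure α}
    {f : α → ℝ} (hf : Integrable f μ) (c : ℝ≥0∞) :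
    ENNReal.ofReal (∫ a, f a ∂μ) ≤ c ↔
      ∫⁻ a, ENNReal.ofReal (f a) ∂μ ≤ (∫⁻ a, ENNReal.ofReal (-f a) ∂μ) + c := by
  have hneg : ∫⁻ a, ENNReal.ofReal (-f a) ∂μ ≠ ⊤ := hf.neg.lintegral_lt_top.ne
  rw [integral_eq_lintegral_pos_part_sub_lintegral_neg_part hf,
    ENNReal.ofReal_sub _ ENNReal.toReal_nonneg, ENNReal.ofReal_toReal hf.lintegral_lt_top.ne,
    ENNReal.ofReal_toReal hneg, tsub_le_iff_right, add_comm c]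

theorem DomPrinciple.ofReal_integral_le {X : Type*} [MeasurableSpace X] {K : Kernel X X}
    {w : X → ℝ≥0∞} (hK : DomPrinciple K w) {f : X → ℝ} (hf : Measurable f)
    (hfK : ∀ x, Integrable f (K x))
    (hpos : ∀ x, 0 < f x → ENNReal.ofReal (∫ y, f y ∂(K x)) ≤ w x) (x : X) :
    ENNReal.ofReal (∫ y, f y ∂(K x)) ≤ w x := by
  simp only [ofReal_integral_le_iff_lintegral_le (hfK _)] at hpos ⊢
  exact hK _ _ hf.ennreal_ofReal hf.neg.ennreal_ofReal
    (fun x hx => hpos x (ENNReal.ofReal_pos.1 hx)) x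

theorem integrable_of_lintegral_ofReal_abs_lt_top {α : Type*} [MeasurableSpace α]
    {μ : Measure α} {f : α → ℝ} (hf : Measurable f)
    (hfin : ∫⁻ a, ENNReal.ofReal |f a| ∂μ < ⊤) : Integrable f μ :=
  ⟨hf.aestronglyMeasurable, (hasFiniteIntegral_iff_norm f).2 (by simpa [Real.norm_eq_abs])⟩

theorem stmt_4_general {X : Type*} [MeasurableSpace X] (K : Kernel X X)
    (φ : X → ℝ → ℝ) (hφm : Measurable (Function.uncurry φ))
    (hφmono : ∀ x, Monotone (φ x))
    (u₁ u₂ v₁ v₂ : X → ℝ)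
    (hu₁ : Measurable u₁) (hu₂ : Measurable u₂)
    (hfin₁ : ∀ x, ∫⁻ y, ENNReal.ofReal |φ y (u₁ y)| ∂(K x) < ⊤)
    (hfin₂ : ∀ x, ∫⁻ y, ENNReal.ofReal |φ y (u₂ y)| ∂(K x) < ⊤)
    (heq₁ : ∀ x, u₁ x + ∫ y, φ y (u₁ y) ∂(K x) = v₁ x)
    (heq₂ : ∀ x, u₂ x + ∫ y, φ y (u₂ y) ∂(K x) = v₂ x) :
    (∀ w : X → ℝ≥0∞, Measurable w → (∀ x, ENNReal.ofReal (v₂ x - v₁ x) ≤ w x) →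
      DomPrinciple K w →
      ∀ x, ENNReal.ofReal (v₂ x - v₁ x - (u₂ x - u₁ x)) ≤ w x) ∧
    ((∀ x, 0 ≤ v₂ x - v₁ x) →
      DomPrinciple K (fun x => ENNReal.ofReal (v₂ x - v₁ x)) →
      ∀ x, 0 ≤ u₂ x - u₁ x ∧ u₂ x - u₁ x ≤ v₂ x - v₁ x) := by
  have hφu : ∀ {u : X → ℝ}, Measurable u → Measurable fun y => φ y (u y) :=
    fun hu => hφm.comp (measurable_id.prodMk hu)
  have hint₁ x := integrable_of_lintegral_ofReal_abs_lt_top (hφu hu₁) (hfin₁ x)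
  have hint₂ x := integrable_of_lintegral_ofReal_abs_lt_top (hφu hu₂) (hfin₂ x)
  have hKf x : ∫ y, (φ y (u₂ y) - φ y (u₁ y)) ∂(K x) = v₂ x - v₁ x - (u₂ x - u₁ x) := by
    rw [integral_sub (hint₂ x) (hint₁ x)]
    linarith [heq₁ x, heq₂ x]
  have hdom (w : X → ℝ≥0∞) (hw : ∀ x, ENNReal.ofReal (v₂ x - v₁ x) ≤ w x)
      (hK : DomPrinciple K w) (x : X) :
      ENNReal.ofReal (v₂ x - v₁ x - (u₂ x - u₁ x)) ≤ w x := by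
    rw [← hKf x]
    refine hK.ofReal_integral_le (f := fun y => φ y (u₂ y) - φ y (u₁ y))
      ((hφu hu₂).sub (hφu hu₁)) (fun x => (hint₂ x).sub (hint₁ x)) (fun x hx => ?_) x
    have hu : u₁ x < u₂ x := (hφmono x).reflect_lt (sub_pos.1 hx)
    rw [hKf x]
    exact (ENNReal.ofReal_le_ofReal (by linarith)).trans (hw x)
  refine ⟨fun w _ => hdom w, fun hv hK x => ?_⟩
  have hle y : u₁ y ≤ u₂ y := by
    have := (ENNReal.ofReal_le_ofReal_iff (hv y)).1 (hdom _ (fun _ => le_rfl) hK y)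
    linarith
  have hKmono := integral_mono (hint₁ x) (hint₂ x) fun y => hφmono y (hle y)
  exact ⟨by linarith [hle x], by linarith [heq₁ x, heq₂ x]⟩

theorem stmt_4 {X : Type*} [MeasurableSpace X] (K : Kernel X X)
    (φ : X → ℝ → ℝ) (hφm : Measurable (Function.uncurry φ))
    (hφ0 : ∀ x, φ x 0 = 0) (hφmono : ∀ x, Monotone (φ x))
    (u₁ u₂ v₁ v₂ : X → ℝ)
    (hu₁ : Measurable u₁) (hu₂ : Measurable u₂) (hv₁ : Measurable v₁) (hv₂ : Measurable v₂)
    (hfin₁ : ∀ x, ∫⁻ y, ENNReal.ofReal |φ y (u₁ y)| ∂(K x) < ⊤)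
    (hfin₂ : ∀ x, ∫⁻ y, ENNReal.ofReal |φ y (u₂ y)| ∂(K x) < ⊤)
    (heq₁ : ∀ x, u₁ x + ∫ y, φ y (u₁ y) ∂(K x) = v₁ x)
    (heq₂ : ∀ x, u₂ x + ∫ y, φ y (u₂ y) ∂(K x) = v₂ x) :
    (∀ w : X → ℝ≥0∞, Measurable w → (∀ x, ENNReal.ofReal (v₂ x - v₁ x) ≤ w x) →
      DomPrinciple K w →
      ∀ x, ENNReal.ofReal (v₂ x - v₁ x - (u₂ x - u₁ x)) ≤ w x) ∧
    ((∀ x, 0 ≤ v₂ x - v₁ x) →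
      DomPrinciple K (fun x => ENNReal.ofReal (v₂ x - v₁ x)) →
      ∀ x, 0 ≤ u₂ x - u₁ x ∧ u₂ x - u₁ x ≤ v₂ x - v₁ x) :=
  stmt_4_general K φ hφm hφmono u₁ u₂ v₁ v₂ hu₁ hu₂ hfin₁ hfin₂ heq₁ heq₂
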